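/- Every relatively complemented lattice is congruence splitting. -/

import Mathlib

/-- A lattice congruence on `L`: an equivalence relation compatible with `⊔` and `⊓`. -/
structure LatticeCong (L : Type*) [Lattice L] where
  r : L → L → Prop
  refl : ∀ x, r x x
  symm : ∀ {x y}, r x y → r y x
  trans : ∀ {x y z}, r x y → r y z → r x z
  sup : ∀ {a b c d}, r a b → r c d → r (a ⊔ c) (b ⊔ d)
  inf : ∀ {a b c d}, r a b → r c d → r (a ⊓ c) (b ⊓ d)

namespace LatticeCong
variable {L : Type*} [Lattice L]

instance : PartialOrder (LatticeCong L) where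
  le θ φ := ∀ x y, θ.r x y → φ.r x y
  le_refl θ := fun _ _ h => h
  le_trans θ φ ψ h1 h2 := fun x y h => h2 x y (h1 x y h)
  le_antisymm θ φ h1 h2 := by
    cases θ; cases φ
    simp only [LatticeCong.mk.injEq]
    funext x y
    exact propext ⟨h1 x y, h2 x y⟩

instance : InfSet (LatticeCong L) where
  sInf S :=
  { r := fun x y => ∀ θ ∈ S, θ.r x y
    refl := fun x θ _ => θ.refl x
    symm := fun h θ hθ => θ.symm (h θ hθ)
    trans := fun h1 h2 θ hθ => θ.trans (h1 θ hθ) (h2 θ hθ)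
    sup := fun h1 h2 θ hθ => θ.sup (h1 θ hθ) (h2 θ hθ)
    inf := fun h1 h2 θ hθ => θ.inf (h1 θ hθ) (h2 θ hθ) }

instance : CompleteLattice (LatticeCong L) :=
  completeLatticeOfInf _ (fun _ =>
    ⟨fun θ hθ _ _ h => h θ hθ, fun _ hφ _ _ h θ hθ => hφ hθ _ _ h⟩)

end LatticeCong

/-- `theta a b` is the principal congruence generated by the pair `(a, b)`. -/
def theta {L : Type*} [Lattice L] (a b : L) : LatticeCong L :=
  sInf {θ : LatticeCong L | θ.r a b}

/-- `thetaPlus a b = Θ⁺(a,b) = Θ(a ⊓ b, a)`, the least congruence collapsing `a` below `b`. -/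
def thetaPlus {L : Type*} [Lattice L] (a b : L) : LatticeCong L :=
  theta (a ⊓ b) a

/-!
Since `Θ(a, b) = α₀ ⊔ α₁`, the elements `a` and `b` are joined by a chain whose steps lie in
`α₀` or `α₁`; projecting it into `[a, b]` by `z ↦ (z ⊔ a) ⊓ b` keeps this. Walk along the
chain maintaining `x₀ ≡ a (α₀)` and `x₁ ≡ a (α₁)` in `[a, b]` with the current element below
`x₀ ⊔ x₁`. At a step `c → d` in `αᵢ`, the relative complement `y` of `u = x₀ ⊔ x₁` in
`[a, u ⊔ d]` satisfies `y ≡ a (αᵢ)`, so replacing `xᵢ` by `xᵢ ⊔ y` brings `d` below `x₀ ⊔ x₁`.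
At the end of the chain `x₀ ⊔ x₁ = b`.
-/

namespace LatticeCong

variable {L : Type*} [Lattice L]

theorem r_theta (a b : L) : (theta a b).r a b :=
  fun _ h => h

theorem theta_le {θ : LatticeCong L} {a b : L} (h : θ.r a b) : theta a b ≤ θ :=
  sInf_le h

theorem r_sup_right (θ : LatticeCong L) {x y : L} (h : θ.r x y) (c : L) :
    θ.r (x ⊔ c) (y ⊔ c) :=
  θ.sup h (θ.refl c)

theorem r_inf_right (θ : LatticeCong L) {x y : L} (h : θ.r x y) (c : L) :
    θ.r (x ⊓ c) (y ⊓ c) :=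
  θ.inf h (θ.refl c)

theorem r_sup_of_r (θ : LatticeCong L) {a x y : L} (hx : θ.r a x) (hy : θ.r a y) :
    θ.r a (x ⊔ y) := by
  simpa only [sup_idem] using θ.sup hx hy

def ofReflTransGen (t : L → L → Prop) (symm : ∀ {x y}, t x y → t y x)
    (sup_right : ∀ {x y} (c : L), t x y → t (x ⊔ c) (y ⊔ c))
    (inf_right : ∀ {x y} (c : L), t x y → t (x ⊓ c) (y ⊓ c)) : LatticeCong L where
  r := Relation.ReflTransGen t
  refl _ := .refl
  symm h :=
    haveI : Std.Symm t := ⟨fun _ _ => symm⟩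
    Std.Symm.symm _ _ h
  trans := .trans
  sup {p q c d} hpq hcd := by
    have h₁ := hpq.lift (· ⊔ c) fun _ _ => sup_right c
    have h₂ := hcd.lift (q ⊔ ·) fun x y h => by simpa only [sup_comm q] using sup_right q h
    exact h₁.trans h₂
  inf {p q c d} hpq hcd := by
    have h₁ := hpq.lift (· ⊓ c) fun _ _ => inf_right c
    have h₂ := hcd.lift (q ⊓ ·) fun x y h => by simpa only [inf_comm q] using inf_right q h
    exact h₁.trans h₂

theorem reflTransGen_of_r_sup {α β : LatticeCong L} {x y : L} (h : (α ⊔ β).r x y) :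
    Relation.ReflTransGen (fun x y => α.r x y ∨ β.r x y) x y := by
  let γ := ofReflTransGen (fun x y => α.r x y ∨ β.r x y) (Or.imp α.symm β.symm)
    (fun c => Or.imp (α.r_sup_right · c) (β.r_sup_right · c))
    (fun c => Or.imp (α.r_inf_right · c) (β.r_inf_right · c))
  have hα : α ≤ γ := fun _ _ h => .single (.inl h)
  have hβ : β ≤ γ := fun _ _ h => .single (.inr h)
  exact sup_le hα hβ x y h

end LatticeCong

open LatticeCong

section RelativelyComplemented

variable {L : Type*} [Lattice L]
  (hrel : ∀ a x b : L, a ≤ x → x ≤ b → ∃ y : L, x ⊓ y = a ∧ x ⊔ y = b)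
include hrel

/-- A congruence collapsing `c ≤ u` and `d` collapses `u` and `u ⊔ d`; meeting with the
relative complement `y` turns this into `a ≡ y`. -/
theorem exists_sup_eq_sup_and_r_of_r {a c d u : L} (hau : a ≤ u) (hcu : c ≤ u) :
    ∃ y, u ⊔ y = u ⊔ d ∧ ∀ α : LatticeCong L, α.r c d → α.r a y := by
  obtain ⟨y, hinf, hsup⟩ := hrel a u (u ⊔ d) hau le_sup_left
  refine ⟨y, hsup, fun α h => α.symm ?_⟩
  have hu : α.r u (u ⊔ d) := by
    simpa only [sup_eq_left.mpr hcu] using α.sup (α.refl u) h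
  simpa only [inf_eq_right.mpr (hsup ▸ le_sup_right : y ≤ u ⊔ d), hinf] using
    α.r_inf_right (α.symm hu) y

theorem exists_mem_Icc_of_reflTransGen {α₀ α₁ : LatticeCong L} {a b c : L} (hab : a ≤ b)
    (h : Relation.ReflTransGen (fun x y => α₀.r x y ∨ α₁.r x y) a c) :
    ∃ x₀ ∈ Set.Icc a b, ∃ x₁ ∈ Set.Icc a b,
      (c ⊔ a) ⊓ b ≤ x₀ ⊔ x₁ ∧ α₀.r a x₀ ∧ α₁.r a x₁ := by
  induction h with
  | refl =>
    exact ⟨a, ⟨le_rfl, hab⟩, a, ⟨le_rfl, hab⟩, by simp, α₀.refl a, α₁.refl a⟩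
  | @tail c d _ hcd ih =>
    obtain ⟨x₀, hx₀, x₁, hx₁, hc, h₀, h₁⟩ := ih
    have hproj : ∀ α : LatticeCong L, α.r c d → α.r ((c ⊔ a) ⊓ b) ((d ⊔ a) ⊓ b) :=
      fun α h => α.r_inf_right (α.r_sup_right h a) b
    obtain ⟨y, hy, hya⟩ := exists_sup_eq_sup_and_r_of_r hrel
      (hx₀.1.trans le_sup_left : a ≤ x₀ ⊔ x₁) hc (d := (d ⊔ a) ⊓ b)
    have hyb : y ≤ b :=
      le_sup_right.trans <| hy.le.trans (sup_le (sup_le hx₀.2 hx₁.2) inf_le_right)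
    have hd : (d ⊔ a) ⊓ b ≤ x₀ ⊔ x₁ ⊔ y := hy ▸ le_sup_right
    rcases hcd with hcd | hcd
    · refine ⟨x₀ ⊔ y, ⟨hx₀.1.trans le_sup_left, sup_le hx₀.2 hyb⟩, x₁, hx₁, ?_,
        α₀.r_sup_of_r h₀ (hya α₀ (hproj α₀ hcd)), h₁⟩
      rwa [sup_right_comm]
    · refine ⟨x₀, hx₀, x₁ ⊔ y, ⟨hx₁.1.trans le_sup_left, sup_le hx₁.2 hyb⟩, ?_, h₀,
        α₁.r_sup_of_r h₁ (hya α₁ (hproj α₁ hcd))⟩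
      rwa [← sup_assoc]

end RelativelyComplemented

/-- Every relatively complemented lattice is congruence splitting. -/
theorem relativelyComplemented_congruenceSplitting {L : Type*} [Lattice L]
    (hrel : ∀ a x b : L, a ≤ x → x ≤ b → ∃ y : L, x ⊓ y = a ∧ x ⊔ y = b) :
    ∀ a b : L, a ≤ b → ∀ α₀ α₁ : LatticeCong L, theta a b = α₀ ⊔ α₁ →
      ∃ x₀ ∈ Set.Icc a b, ∃ x₁ ∈ Set.Icc a b,
        x₀ ⊔ x₁ = b ∧ theta a x₀ ≤ α₀ ∧ theta a x₁ ≤ α₁ := by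
  intro a b hab α₀ α₁ hθ
  have hchain := reflTransGen_of_r_sup (hθ ▸ r_theta a b)
  obtain ⟨x₀, hx₀, x₁, hx₁, hb, h₀, h₁⟩ := exists_mem_Icc_of_reflTransGen hrel hab hchain
  rw [sup_eq_left.mpr hab, inf_idem] at hb
  exact ⟨x₀, hx₀, x₁, hx₁, (sup_le hx₀.2 hx₁.2).antisymm hb, theta_le h₀, theta_le h₁⟩
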